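/- Yano's lemma: for every positive integer n, the L¹ norm of the n-th Walsh–Fejér kernel K_n := (1/n) ∑_{k=1}^n D_k on the Walsh group G is at most 2, i.e. ∫_G |K_n| dμ ≤ 2. -/

import Mathlib

/-!
Write `n = 2^m + q` with `q < 2^m`. Paley's enumeration gives `w_{2^m + j} = r_m w_j` for `j < 2^m`,
hence `D_{2^m + j} = D_{2^m} + r_m D_j` and
`n K_n = 2^m K_{2^m} + q D_{2^m} + r_m · q K_q`.
The first two terms are nonnegative (`D_{2^m} = ∏_{i<m} (1 + r_i)`) with integrals `2^m` and `q`,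
since every Walsh function except `w_0` has mean zero, and `|r_m| = 1`; so by strong induction
`‖n K_n‖₁ ≤ 2^m + q + 2q ≤ 2n`.
-/

open MeasureTheory Finset
open scoped ENNReal NNReal

noncomputable section

abbrev G : Type := ℕ → ZMod 2

instance : TopologicalSpace (ZMod 2) := ⊥
instance : DiscreteTopology (ZMod 2) := ⟨rfl⟩
instance : IsTopologicalAddGroup (ZMod 2) :=
  { continuous_add := continuous_of_discreteTopology
    continuous_neg := continuous_of_discreteTopology }
instance : MeasurableSpace (ZMod 2) := ⊤
instance : BorelSpace (ZMod 2) := ⟨(borel_eq_top_of_discrete).symm⟩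

/-- The normalized Haar measure on the Walsh group. -/
def μ : Measure G := Measure.addHaarMeasure ⊤

/-- Rademacher function. -/
def rad (k : ℕ) (x : G) : ℝ := if x k = 0 then 1 else -1

/-- Walsh–Paley function. -/
def walsh (n : ℕ) (x : G) : ℝ :=
  ∏ k ∈ Finset.range (n + 1), if n.testBit k then rad k x else 1

/-- Walsh–Dirichlet kernel. -/
def D (m : ℕ) (x : G) : ℝ := ∑ k ∈ Finset.range m, walsh k x

/-- Walsh–Fejér kernel. -/
def Fejer (m : ℕ) (x : G) : ℝ := (1 / m : ℝ) * ∑ k ∈ Finset.range m, D (k + 1) x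

/-- Dyadic interval `I_n`. -/
def I (n : ℕ) : Set G := {y | ∀ i < n, y i = 0}

/-- The dyadic "absolute value" on the Walsh group. -/
def absG (t : G) : ℝ := ∑' i, ((t i).val : ℝ) / 2 ^ (i + 1)

/-- The `L^p` modulus of continuity. -/
def omegaMod (p : ℝ≥0∞) (f : G → ℝ) (δ : ℝ) : ℝ≥0∞ :=
  ⨆ t ∈ {t : G | absG t < δ}, eLpNorm (fun x => f (x + t) - f x) p μ

/-- Walsh–Fourier coefficient. -/
def wCoeff (f : G → ℝ) (k : ℕ) : ℝ := ∫ x, f x * walsh k x ∂μ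

/-- Partial sum of the Walsh–Fourier series. -/
def S (m : ℕ) (f : G → ℝ) (x : G) : ℝ :=
  ∑ k ∈ Finset.range m, wCoeff f k * walsh k x

lemma abs_rad (k : ℕ) (x : G) : |rad k x| = 1 := by
  unfold rad; split_ifs <;> simp

lemma one_add_rad_nonneg (k : ℕ) (x : G) : 0 ≤ 1 + rad k x := by
  linarith [neg_abs_le (rad k x), abs_rad k x]

lemma rad_add (k : ℕ) (x y : G) : rad k (x + y) = rad k x * rad k y := by
  have h : ∀ a : ZMod 2, a = 0 ∨ a = 1 := by decide
  rcases h (x k) with ha | ha <;> rcases h (y k) with hb | hb <;>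
    simp [rad, ha, hb, show (1 : ZMod 2) + 1 = 0 from rfl]

lemma walsh_zero (x : G) : walsh 0 x = 1 := by
  simp [walsh]

lemma walsh_add (n : ℕ) (x y : G) : walsh n (x + y) = walsh n x * walsh n y := by
  rw [walsh, walsh, walsh, ← prod_mul_distrib]
  refine prod_congr rfl fun k _ => ?_
  split_ifs <;> simp [rad_add]

lemma abs_walsh (n : ℕ) (x : G) : |walsh n x| = 1 := by
  rw [walsh, abs_prod]
  exact prod_eq_one fun k _ => by split_ifs <;> simp [abs_rad]

lemma walsh_eq_prod_range {n N : ℕ} (hn : n < 2 ^ N) (x : G) :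
    walsh n x = ∏ k ∈ range N, if n.testBit k then rad k x else 1 := by
  have pad : ∀ {M M'}, M ≤ M' → n < 2 ^ M →
      ∏ k ∈ range M, (if n.testBit k then rad k x else 1)
        = ∏ k ∈ range M', (if n.testBit k then rad k x else 1) := by
    intro M M' hMM' hM
    refine prod_subset (range_subset_range.2 hMM') fun k _ hk => ?_
    have hMk : M ≤ k := by simpa using hk
    simp [Nat.testBit_lt_two_pow (hM.trans_le (Nat.pow_le_pow_right two_pos hMk))]
  have hn1 : n < 2 ^ (n + 1) := Nat.lt_two_pow_self.trans (Nat.pow_lt_pow_succ one_lt_two)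
  rw [walsh, pad (le_max_left (n + 1) N) hn1, pad (le_max_right (n + 1) N) hn]

lemma walsh_two_pow_add {m j : ℕ} (hj : j < 2 ^ m) (x : G) :
    walsh (2 ^ m + j) x = rad m x * walsh j x := by
  have hlt : 2 ^ m + j < 2 ^ (m + 1) := by rw [pow_succ]; omega
  rw [walsh_eq_prod_range hlt, walsh_eq_prod_range hj, prod_range_succ, mul_comm,
    Nat.testBit_two_pow_add_eq, Nat.testBit_lt_two_pow hj]
  refine congrArg₂ _ rfl (prod_congr rfl fun i hi => ?_)
  rw [Nat.testBit_two_pow_add_gt (mem_range.1 hi)]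

instance : μ.IsAddLeftInvariant := by unfold μ; infer_instance

instance : IsProbabilityMeasure μ :=
  ⟨by simpa [μ] using
    Measure.addHaarMeasure_self (K₀ := (⊤ : TopologicalSpace.PositiveCompacts G))⟩

lemma measurable_rad (k : ℕ) : Measurable (rad k) :=
  (measurable_from_top (f := fun a : ZMod 2 => if a = 0 then (1 : ℝ) else -1)).comp
    (measurable_pi_apply (X := fun _ : ℕ => ZMod 2) k)

lemma integrable_walsh (n : ℕ) : Integrable (walsh n) μ := by
  have : Measurable (walsh n) :=
    Finset.measurable_prod _ fun k _ => by
      split_ifs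
      exacts [measurable_rad k, measurable_const]
  exact .of_bound this.aestronglyMeasurable 1 (.of_forall fun x => (abs_walsh n x).le)

lemma integral_walsh (n : ℕ) : ∫ x, walsh n x ∂μ = if n = 0 then 1 else 0 := by
  split_ifs with hn
  · simp [hn, walsh_zero]
  obtain ⟨i, hi, -⟩ := Nat.exists_most_significant_bit hn
  -- translating by the `i`-th unit vector flips the sign of `walsh n`
  let e : G := Pi.single i 1
  have he : walsh n e = -1 := by
    have hin : i < n + 1 := (Nat.lt_two_pow_self.trans_le (Nat.ge_two_pow_of_testBit hi)).trans
      n.lt_succ_self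
    rw [walsh, prod_eq_single_of_mem i (mem_range.2 hin)]
    · simp [hi, rad, e]
    · intro k _ hk
      simp [rad, e, Pi.single_eq_of_ne hk]
  have hinv := integral_add_left_eq_self (μ := μ) (walsh n) e
  simp only [walsh_add, he, neg_one_mul, integral_neg] at hinv
  linarith

lemma D_two_pow_add {m r : ℕ} (hr : r ≤ 2 ^ m) (x : G) :
    D (2 ^ m + r) x = D (2 ^ m) x + rad m x * D r x := by
  rw [D, sum_range_add, D, D, mul_sum]
  exact congrArg₂ _ rfl
    (sum_congr rfl fun j hj => walsh_two_pow_add ((mem_range.1 hj).trans_le hr) x)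

lemma D_two_pow_nonneg (m : ℕ) (x : G) : 0 ≤ D (2 ^ m) x := by
  induction m with
  | zero => simp [D, walsh_zero]
  | succ m ih =>
    rw [pow_succ, mul_two, D_two_pow_add le_rfl, ← one_add_mul]
    exact mul_nonneg (one_add_rad_nonneg m x) ih

lemma integrable_D (k : ℕ) : Integrable (D k) μ :=
  integrable_finsetSum _ fun j _ => integrable_walsh j

lemma integral_D {k : ℕ} (hk : 0 < k) : ∫ x, D k x ∂μ = 1 := by
  simp [D, integral_finsetSum _ fun j _ => integrable_walsh j, integral_walsh, hk]

/-- `n K_n`, so that `Fejer n = (1 / n) * dirichletSum n`. -/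
def dirichletSum (n : ℕ) (x : G) : ℝ := ∑ k ∈ range n, D (k + 1) x

lemma dirichletSum_two_pow_add {m q : ℕ} (hq : q ≤ 2 ^ m) (x : G) :
    dirichletSum (2 ^ m + q) x
      = dirichletSum (2 ^ m) x + q * D (2 ^ m) x + rad m x * dirichletSum q x := by
  have hD : ∀ j ∈ range q, D (2 ^ m + j + 1) x = D (2 ^ m) x + rad m x * D (j + 1) x :=
    fun j hj => by rw [add_assoc, D_two_pow_add (by have := mem_range.1 hj; omega)]
  rw [dirichletSum, dirichletSum, dirichletSum, sum_range_add, sum_congr rfl hD, sum_add_distrib,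
    sum_const, card_range, nsmul_eq_mul, ← mul_sum]
  ring

lemma dirichletSum_two_pow_nonneg (m : ℕ) (x : G) : 0 ≤ dirichletSum (2 ^ m) x := by
  induction m with
  | zero => simp [dirichletSum, D, walsh_zero]
  | succ m ih =>
    rw [pow_succ, mul_two, dirichletSum_two_pow_add le_rfl]
    nlinarith [mul_nonneg (one_add_rad_nonneg m x) ih,
      mul_nonneg (Nat.cast_nonneg (2 ^ m)) (D_two_pow_nonneg m x)]

lemma abs_dirichletSum_two_pow_add_le {m q : ℕ} (hq : q ≤ 2 ^ m) (x : G) :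
    |dirichletSum (2 ^ m + q) x|
      ≤ dirichletSum (2 ^ m) x + q * D (2 ^ m) x + |dirichletSum q x| := by
  have hpos : 0 ≤ dirichletSum (2 ^ m) x + q * D (2 ^ m) x :=
    add_nonneg (dirichletSum_two_pow_nonneg m x) (mul_nonneg q.cast_nonneg (D_two_pow_nonneg m x))
  rw [dirichletSum_two_pow_add hq]
  calc _ ≤ |dirichletSum (2 ^ m) x + q * D (2 ^ m) x| + |rad m x * dirichletSum q x| :=
        abs_add_le _ _
    _ = _ := by rw [abs_of_nonneg hpos, abs_mul, abs_rad, one_mul]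

lemma integrable_dirichletSum (n : ℕ) : Integrable (dirichletSum n) μ :=
  integrable_finsetSum _ fun k _ => integrable_D (k + 1)

lemma integral_dirichletSum (n : ℕ) : ∫ x, dirichletSum n x ∂μ = n := by
  simp [dirichletSum, integral_finsetSum _ fun k _ => integrable_D (k + 1), integral_D]

lemma integral_abs_dirichletSum_le (n : ℕ) : ∫ x, |dirichletSum n x| ∂μ ≤ 2 * n := by
  induction n using Nat.strong_induction_on with
  | _ n ih =>
  rcases n.eq_zero_or_pos with rfl | hn
  · simp [dirichletSum]
  obtain ⟨m, q, hq, rfl⟩ : ∃ m q, q < 2 ^ m ∧ n = 2 ^ m + q := by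
    have hlow := Nat.pow_log_le_self 2 hn.ne'
    have hhigh := Nat.lt_pow_succ_log_self one_lt_two n
    rw [pow_succ] at hhigh
    exact ⟨Nat.log 2 n, n - 2 ^ Nat.log 2 n, by omega, by omega⟩
  have hint : Integrable (fun x => dirichletSum (2 ^ m) x + q * D (2 ^ m) x) μ :=
    (integrable_dirichletSum _).add ((integrable_D _).const_mul _)
  calc ∫ x, |dirichletSum (2 ^ m + q) x| ∂μ
      ≤ ∫ x, dirichletSum (2 ^ m) x + q * D (2 ^ m) x + |dirichletSum q x| ∂μ :=
        integral_mono (integrable_dirichletSum _).abs (hint.add (integrable_dirichletSum q).abs)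
          fun x => abs_dirichletSum_two_pow_add_le hq.le x
    _ = 2 ^ m + q + ∫ x, |dirichletSum q x| ∂μ := by
        rw [integral_add hint (integrable_dirichletSum q).abs,
          integral_add (integrable_dirichletSum _) ((integrable_D _).const_mul _),
          integral_const_mul, integral_dirichletSum, integral_D (by positivity)]
        push_cast; ring
    _ ≤ 2 ^ m + q + 2 * q := by gcongr; exact ih q (by omega)
    _ ≤ 2 * ↑(2 ^ m + q) := by
        have : (q : ℝ) ≤ 2 ^ m := by exact_mod_cast hq.le
        push_cast; linarith

theorem yano_lemma_general (n : ℕ) : eLpNorm (Fejer n) 1 μ ≤ 2 := by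
  have hF : Integrable (Fejer n) μ := (integrable_dirichletSum n).const_mul _
  have hbound : (1 / n : ℝ) * ∫ x, |dirichletSum n x| ∂μ ≤ 2 := by
    rcases n.eq_zero_or_pos with rfl | hn
    · simp
    calc (1 / n : ℝ) * ∫ x, |dirichletSum n x| ∂μ ≤ (1 / n) * (2 * n) := by
          gcongr; exact integral_abs_dirichletSum_le n
      _ = 2 := by field_simp
  rw [eLpNorm_one_eq_lintegral_enorm, ← ofReal_integral_norm_eq_lintegral_enorm hF]
  calc ENNReal.ofReal (∫ x, ‖Fejer n x‖ ∂μ)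
      = ENNReal.ofReal ((1 / n : ℝ) * ∫ x, |dirichletSum n x| ∂μ) := by
        simp only [Fejer, dirichletSum, Real.norm_eq_abs, abs_mul,
          abs_of_nonneg (by positivity : (0 : ℝ) ≤ 1 / n), integral_const_mul]
    _ ≤ ENNReal.ofReal 2 := ENNReal.ofReal_le_ofReal hbound
    _ = 2 := ENNReal.ofReal_ofNat 2

/-- Yano's lemma: the Fejér kernels are uniformly bounded in `L¹` by 2. -/
theorem yano_lemma (n : ℕ) (hn : 0 < n) : eLpNorm (Fejer n) 1 μ ≤ 2 :=
  yano_lemma_general n
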